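/- Quadratic identity on the kernel: for every g ∈ Ker L̂, i.e. g = p√M with p(v) = a + b·v + c|v|² for some a, c ∈ ℝ, b ∈ ℝ³, one has Γ̂(g, g) = ½ L̂(p²√M); equivalently, Q(pM, pM) = −½[Q(p²M, M) + Q(M, p²M)] for every such collision-invariant polynomial p. -/

import Mathlib

open MeasureTheory Real Filter Topology

noncomputable section

/-- Velocity/position space `ℝ³`. -/
abbrev V3 : Type := EuclideanSpace ℝ (Fin 3)

/-- The global Maxwellian `M(v) = (2π)^{-3/2} exp(-|v|²/2)`. -/
def Mw (v : V3) : ℝ := (2 * π) ^ (-(3:ℝ)/2) * Real.exp (-‖v‖ ^ 2 / 2)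

def sqrtM (v : V3) : ℝ := Real.sqrt (Mw v)

/-- Real inner product on `ℝ³`. -/
def rinner (v w : V3) : ℝ := inner ℝ v w

/-- Post-collisional velocity `v' = v - ((v-v_*)·σ)σ`. -/
def vpr (v w σ : V3) : V3 := v - (rinner (v - w) σ) • σ

/-- Post-collisional velocity `v'_* = v_* + ((v-v_*)·σ)σ`. -/
def vps (v w σ : V3) : V3 := w + (rinner (v - w) σ) • σ

/-- Hard-sphere collision kernel `B(v-v_*,σ) = b(σ·(v-v_*)/|v-v_*|)|v-v_*|`. -/
def kern (b : ℝ → ℝ) (v w σ : V3) : ℝ := b (rinner σ (v - w) / ‖v - w‖) * ‖v - w‖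

/-- Grad angular cutoff: `b` nonnegative, measurable, integrable on the sphere. -/
structure GradCutoff (b : ℝ → ℝ) : Prop where
  nonneg : ∀ t, 0 ≤ b t
  meas : Measurable b
  cutoff : ∀ e : V3, ‖e‖ = 1 →
    IntegrableOn (fun σ : V3 => b (rinner σ e)) (Metric.sphere (0 : V3) 1) μH[2]

/-- Symmetrized Boltzmann collision operator `Q(f,g)`. -/
def Qop (b : ℝ → ℝ) (f g : V3 → ℝ) (v : V3) : ℝ :=
  (1/2) * ∫ w : V3, (∫ σ in Metric.sphere (0 : V3) 1,
    kern b v w σ *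
      (f (vpr v w σ) * g (vps v w σ) + f (vps v w σ) * g (vpr v w σ)
        - f v * g w - f w * g v) ∂μH[2])

/-- Bilinear linearized Boltzmann operator `L̂(g,h) = -M^{-1/2}[Q(g√M,M) + Q(M,h√M)]`. -/
def Lhat (b : ℝ → ℝ) (g h : V3 → ℝ) (v : V3) : ℝ :=
  -(Qop b (fun w => g w * sqrtM w) Mw v + Qop b Mw (fun w => h w * sqrtM w) v) / sqrtM v

/-- Linearized Boltzmann operator `L̂ g = L̂(g,g)`. -/
def Lhat1 (b : ℝ → ℝ) (g : V3 → ℝ) : V3 → ℝ := Lhat b g g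

/-- Bilinear operator `Γ̂(g,h) = M^{-1/2} Q(g√M, h√M)`. -/
def Ghat (b : ℝ → ℝ) (g h : V3 → ℝ) (v : V3) : ℝ :=
  Qop b (fun w => g w * sqrtM w) (fun w => h w * sqrtM w) v / sqrtM v

/-- Collision frequency `ν(v) = ∫ |v-v_*| M(v_*) dv_*`. -/
def nu (v : V3) : ℝ := ∫ w : V3, ‖v - w‖ * Mw w

/-- Kernel of `L̂`: infinitesimal Maxwellians `(a + b·v + c|v|²)√M`. -/
def kerLhat : Set (V3 → ℝ) :=
  {g | ∃ (a c : ℝ) (bv : V3), ∀ v, g v = (a + rinner bv v + c * ‖v‖ ^ 2) * sqrtM v}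

/-- Orthogonality to `Ker L̂` in `L²(ℝ³_v)`. -/
def PerpKerLhat (g : V3 → ℝ) : Prop := ∀ k ∈ kerLhat, ∫ v : V3, g v * k v = 0

/-- `A_i(v) = ½(|v|²-5) v_i √M`. -/
def Afun (i : Fin 3) (v : V3) : ℝ := (1/2) * (‖v‖ ^ 2 - 5) * v i * sqrtM v

/-- `B_{ij}(v) = (v_i v_j - |v|²δ_{ij}/3)√M`. -/
def Bfun (i j : Fin 3) (v : V3) : ℝ :=
  (v i * v j - (if i = j then ‖v‖ ^ 2 / 3 else 0)) * sqrtM v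

/-- `1/σ = ½ ∫ v·L̂(v√M, v√M) √M dv`. -/
def sigmaInv (b : ℝ → ℝ) : ℝ :=
  (1/2) * ∫ v : V3, (∑ i : Fin 3, v i *
    Lhat b (fun w => w i * sqrtM w) (fun w => w i * sqrtM w) v) * sqrtM v

/-- `1/λ = (1/20) ∫ |v|² L̂(|v|²√M, |v|²√M) √M dv`. -/
def lambdaInv (b : ℝ → ℝ) : ℝ :=
  (1/20) * ∫ v : V3, ‖v‖ ^ 2 *
    Lhat b (fun w => ‖w‖ ^ 2 * sqrtM w) (fun w => ‖w‖ ^ 2 * sqrtM w) v * sqrtM v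

/-- Viscosity `μ = (1/(6√(2π))) ∫₀^∞ β(r)(r²-5)² r⁴ e^{-r²/2} dr`. -/
def muC (β : ℝ → ℝ) : ℝ :=
  (1 / (6 * Real.sqrt (2 * π))) *
    ∫ s in Set.Ioi (0:ℝ), β s * (s ^ 2 - 5) ^ 2 * s ^ 4 * Real.exp (-s ^ 2 / 2)

/-- Heat conductivity `κ = (2/(15√(2π))) ∫₀^∞ α(r) r⁶ e^{-r²/2} dr`. -/
def kappaC (α : ℝ → ℝ) : ℝ :=
  (2 / (15 * Real.sqrt (2 * π))) *
    ∫ s in Set.Ioi (0:ℝ), α s * s ^ 6 * Real.exp (-s ^ 2 / 2)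

/-- Partial derivative in `x_i` of a function on `ℝ_t × ℝ³_x`. -/
def pdX (φ : ℝ × V3 → ℝ) (i : Fin 3) (p : ℝ × V3) : ℝ :=
  fderiv ℝ (fun y => φ (p.1, y)) p.2 (EuclideanSpace.single i 1)

/-- Partial derivative in `t`. -/
def pdT (φ : ℝ × V3 → ℝ) (p : ℝ × V3) : ℝ := deriv (fun s => φ (s, p.2)) p.1

/-- Spatial Laplacian. -/
def lapX (φ : ℝ × V3 → ℝ) (p : ℝ × V3) : ℝ := ∑ i : Fin 3, pdX (fun q => pdX φ i q) i p

/-- Test functions on `(0,∞) × ℝ³`. -/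
def TestFn (φ : ℝ × V3 → ℝ) : Prop :=
  ContDiff ℝ (⊤ : ℕ∞) φ ∧ HasCompactSupport φ ∧ ∀ p : ℝ × V3, p.1 ≤ 0 → φ p = 0

/-- Test functions on `(0,∞) × ℝ³ × ℝ³`. -/
def TestFn3 (φ : ℝ × V3 × V3 → ℝ) : Prop :=
  ContDiff ℝ (⊤ : ℕ∞) φ ∧ HasCompactSupport φ ∧ ∀ p : ℝ × V3 × V3, p.1 ≤ 0 → φ p = 0

/-- Convergence in the sense of distributions on `(0,∞) × ℝ³` as `ε → 0⁺`. -/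
def DistConv2 (F : ℝ → ℝ → V3 → ℝ) (F0 : ℝ → V3 → ℝ) : Prop :=
  ∀ φ : ℝ × V3 → ℝ, TestFn φ →
    Tendsto (fun ε => ∫ p : ℝ × V3, F ε p.1 p.2 * φ p) (nhdsWithin (0:ℝ) (Set.Ioi 0))
      (nhds (∫ p : ℝ × V3, F0 p.1 p.2 * φ p))

/-- Convergence in the sense of distributions on `(0,∞) × ℝ³ × ℝ³` as `ε → 0⁺`. -/
def DistConv3 (F : ℝ → ℝ → V3 → V3 → ℝ) (F0 : ℝ → V3 → V3 → ℝ) : Prop :=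
  ∀ φ : ℝ × V3 × V3 → ℝ, TestFn3 φ →
    Tendsto (fun ε => ∫ p : ℝ × V3 × V3, F ε p.1 p.2.1 p.2.2 * φ p)
      (nhdsWithin (0:ℝ) (Set.Ioi 0))
      (nhds (∫ p : ℝ × V3 × V3, F0 p.1 p.2.1 p.2.2 * φ p))

/-- The scaled binary-mixture Boltzmann system: nonnegativity of
`f_l^ε = M + ε^r g_l^ε √M` and the scaled equations, for all `ε ∈ (0,1)`, `t > 0`. -/
def MixtureSol (b : ℝ → ℝ) (r : ℝ) (c : Fin 2 → ℝ)
    (g : Fin 2 → ℝ → ℝ → V3 → V3 → ℝ) : Prop :=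
  ∀ l n : Fin 2, l ≠ n → ∀ ε ∈ Set.Ioo (0:ℝ) 1, ∀ t ∈ Set.Ioi (0:ℝ), ∀ (x v : V3),
    (0 ≤ Mw v + ε ^ r * g l ε t x v * sqrtM v) ∧
    (ε * deriv (fun s => Mw v + ε ^ r * g l ε s x v * sqrtM v) t
      + rinner v (gradient (fun y => Mw v + ε ^ r * g l ε t y v * sqrtM v) x)
      = ε ^ (-(c l)) * Qop b (fun w => Mw w + ε ^ r * g l ε t x w * sqrtM w)
            (fun w => Mw w + ε ^ r * g l ε t x w * sqrtM w) v
        + ε * Qop b (fun w => Mw w + ε ^ r * g l ε t x w * sqrtM w)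
            (fun w => Mw w + ε ^ r * g n ε t x w * sqrtM w) v)

/-- Moment-convergence hypothesis (MC): `g^ε → g` and all the listed moments converge
in the sense of distributions on `(0,∞) × ℝ³` as `ε → 0⁺`. -/
def MC (b : ℝ → ℝ) (Ah : Fin 3 → V3 → ℝ) (Bh : Fin 3 → Fin 3 → V3 → ℝ)
    (g : Fin 2 → ℝ → ℝ → V3 → V3 → ℝ) (g0 : Fin 2 → ℝ → V3 → V3 → ℝ) : Prop :=
  (∀ l, DistConv3 (g l) (g0 l)) ∧
  (∀ l, DistConv2 (fun ε t x => ∫ v : V3, g l ε t x v * sqrtM v)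
      (fun t x => ∫ v : V3, g0 l t x v * sqrtM v)) ∧
  (∀ l i, DistConv2 (fun ε t x => ∫ v : V3, g l ε t x v * v i * sqrtM v)
      (fun t x => ∫ v : V3, g0 l t x v * v i * sqrtM v)) ∧
  (∀ l i j, DistConv2 (fun ε t x => ∫ v : V3, g l ε t x v * v i * v j * sqrtM v)
      (fun t x => ∫ v : V3, g0 l t x v * v i * v j * sqrtM v)) ∧
  (∀ l i, DistConv2 (fun ε t x => ∫ v : V3, g l ε t x v * v i * ‖v‖ ^ 2 * sqrtM v)
      (fun t x => ∫ v : V3, g0 l t x v * v i * ‖v‖ ^ 2 * sqrtM v)) ∧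
  (∀ l i j, DistConv2 (fun ε t x => ∫ v : V3, g l ε t x v * Ah i v * v j * sqrtM v)
      (fun t x => ∫ v : V3, g0 l t x v * Ah i v * v j * sqrtM v)) ∧
  (∀ l n, l ≠ n → ∀ i, DistConv2
      (fun ε t x => ∫ v : V3,
        Ghat b (fun w => g l ε t x w) (fun w => g n ε t x w) v * Ah i v * sqrtM v)
      (fun t x => ∫ v : V3,
        Ghat b (fun w => g0 l t x w) (fun w => g0 n t x w) v * Ah i v * sqrtM v)) ∧
  (∀ l i j k, DistConv2 (fun ε t x => ∫ v : V3, g l ε t x v * Bh i j v * v k * sqrtM v)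
      (fun t x => ∫ v : V3, g0 l t x v * Bh i j v * v k * sqrtM v)) ∧
  (∀ l n, l ≠ n → ∀ i j, DistConv2
      (fun ε t x => ∫ v : V3,
        Ghat b (fun w => g l ε t x w) (fun w => g n ε t x w) v * Bh i j v * sqrtM v)
      (fun t x => ∫ v : V3,
        Ghat b (fun w => g0 l t x w) (fun w => g0 n t x w) v * Bh i j v * sqrtM v))

/-- Pair inner product in `L²_v`. -/
def pinner (g h : Fin 2 → V3 → ℝ) : ℝ := ∑ l : Fin 2, ∫ v : V3, g l v * h l v

def phi1 : Fin 2 → V3 → ℝ := fun l v => if l = 0 then sqrtM v else 0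
def phi2 : Fin 2 → V3 → ℝ := fun l v => if l = 1 then sqrtM v else 0
def phiU (i : Fin 3) : Fin 2 → V3 → ℝ := fun _ v => v i * sqrtM v
def phi6 : Fin 2 → V3 → ℝ := fun _ v => (‖v‖ ^ 2 - 3) / 2 * sqrtM v

/-- Orthogonal projection `ℙ` onto `Ker 𝓛`. -/
def PPproj (g : Fin 2 → V3 → ℝ) : Fin 2 → V3 → ℝ := fun l v =>
  pinner g phi1 * phi1 l v + pinner g phi2 * phi2 l v
    + (∑ i : Fin 3, (pinner g (phiU i) / 2) * phiU i l v)
    + (pinner g phi6 / 3) * phi6 l v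

/-- `ℙ⊥ = I - ℙ`. -/
def PPperp (g : Fin 2 → V3 → ℝ) : Fin 2 → V3 → ℝ := fun l v => g l v - PPproj g l v

/-- Componentwise orthogonal projection onto `Ker L̂`. -/
def Pproj1 (g : V3 → ℝ) : V3 → ℝ := fun v =>
  ((∫ w : V3, (5/2 - ‖w‖ ^ 2 / 2) * g w * sqrtM w)
    + (∑ i : Fin 3, (∫ w : V3, w i * g w * sqrtM w) * v i)
    + (∫ w : V3, (‖w‖ ^ 2 / 6 - 1/2) * g w * sqrtM w) * ‖v‖ ^ 2) * sqrtM v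

/-- `𝐏⊥ = I - 𝐏` (componentwise). -/
def Pperp (g : Fin 2 → V3 → ℝ) : Fin 2 → V3 → ℝ := fun l v => g l v - Pproj1 (g l) v

/-- `L g = (L̂g₁, L̂g₂)`. -/
def Lpair (b : ℝ → ℝ) (g : Fin 2 → V3 → ℝ) : Fin 2 → V3 → ℝ := fun l => Lhat1 b (g l)

/-- `𝓛 g = (L̂(g₁,g₂)+L̂g₁, L̂(g₂,g₁)+L̂g₂)`. -/
def Lcal (b : ℝ → ℝ) (g : Fin 2 → V3 → ℝ) : Fin 2 → V3 → ℝ :=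
  fun l v => Lhat b (g l) (g (1 - l)) v + Lhat1 b (g l) v

/-- `Γ(g,h) = (Γ̂(g₁,h₁), Γ̂(g₂,h₂))`. -/
def Gpair (b : ℝ → ℝ) (g h : Fin 2 → V3 → ℝ) : Fin 2 → V3 → ℝ := fun l => Ghat b (g l) (h l)

/-- `Γ̃(g,h) = (Γ̂(g₁,h₂), Γ̂(g₂,h₁))`. -/
def Gtil (b : ℝ → ℝ) (g h : Fin 2 → V3 → ℝ) : Fin 2 → V3 → ℝ := fun l => Ghat b (g l) (h (1 - l))

/-- Partial derivative `∂_{x_i}`. -/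
def pdx (i : Fin 3) (f : V3 → ℝ) : V3 → ℝ := fun x => fderiv ℝ f x (EuclideanSpace.single i 1)

/-- Multi-index derivative `∂_x^α`. -/
def mderiv (a : ℕ × ℕ × ℕ) (f : V3 → ℝ) : V3 → ℝ :=
  (pdx 0)^[a.1] ((pdx 1)^[a.2.1] ((pdx 2)^[a.2.2] f))

/-- Length `|α|` of a multi-index. -/
def deg (a : ℕ × ℕ × ℕ) : ℕ := a.1 + a.2.1 + a.2.2

/-- All multi-indices with `|α| ≤ s`. -/
def idxSet (s : ℕ) : Finset (ℕ × ℕ × ℕ) :=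
  (Finset.range (s+1) ×ˢ Finset.range (s+1) ×ˢ Finset.range (s+1)).filter (fun a => deg a ≤ s)

def one3 : V3 → ℝ := fun _ => 1

/-- Squared (weighted) norm `‖g‖²_{H^s_x L²_v(w)}` for pair distributions `g(l,x,v)`. -/
def sqHs (w : V3 → ℝ) (s : ℕ) (g : Fin 2 → V3 → V3 → ℝ) : ℝ :=
  ∑ a ∈ idxSet s, ∑ l : Fin 2, ∫ x : V3, ∫ v : V3, (mderiv a (fun y => g l y v) x) ^ 2 * w v

/-- Squared Sobolev norm `‖h‖²_{H^s_x}` for scalar functions of `x`. -/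
def sqHsX (s : ℕ) (h : V3 → ℝ) : ℝ := ∑ a ∈ idxSet s, ∫ x : V3, (mderiv a h x) ^ 2

/-- `‖∇_x g‖²_{H^{s-1}_x L²_v}`. -/
def sqGradHs (s : ℕ) (g : Fin 2 → V3 → V3 → ℝ) : ℝ :=
  ∑ i : Fin 3, sqHs one3 (s - 1) (fun l x v => pdx i (fun y => g l y v) x)

def PPperpG (G : Fin 2 → V3 → V3 → ℝ) : Fin 2 → V3 → V3 → ℝ :=
  fun l x v => PPperp (fun m w => G m x w) l v
def PPprojG (G : Fin 2 → V3 → V3 → ℝ) : Fin 2 → V3 → V3 → ℝ :=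
  fun l x v => PPproj (fun m w => G m x w) l v
def PperpG (G : Fin 2 → V3 → V3 → ℝ) : Fin 2 → V3 → V3 → ℝ :=
  fun l x v => Pperp (fun m w => G m x w) l v
def PprojG (G : Fin 2 → V3 → V3 → ℝ) : Fin 2 → V3 → V3 → ℝ :=
  fun l x v => Pproj1 (fun w => G l x w) v

/-- The scaled two-species remainder system
`ε∂_t g + v·∇_x g + (1/ε - ε)Lg + ε𝓛g = Γ(g,g) + ε²Γ̃(g,g)` on a time set `I`. -/
def RemSol (b : ℝ → ℝ) (ε : ℝ) (g : ℝ → Fin 2 → V3 → V3 → ℝ) (I : Set ℝ) : Prop :=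
  ∀ t ∈ I, ∀ (l : Fin 2) (x v : V3),
    ε * deriv (fun s => g s l x v) t
      + rinner v (gradient (fun y => g t l y v) x)
      + (1/ε - ε) * Lpair b (fun m w => g t m x w) l v
      + ε * Lcal b (fun m w => g t m x w) l v
    = Gpair b (fun m w => g t m x w) (fun m w => g t m x w) l v
      + ε ^ 2 * Gtil b (fun m w => g t m x w) (fun m w => g t m x w) l v

/-- Energy functional `𝔼_s(t)`. -/
def Es (s : ℕ) (g : ℝ → Fin 2 → V3 → V3 → ℝ) (t : ℝ) : ℝ := sqHs one3 s (g t)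

/-- Dissipation functional `𝔻_s(t)`. -/
def Ds (s : ℕ) (ε : ℝ) (g : ℝ → Fin 2 → V3 → V3 → ℝ) (t : ℝ) : ℝ :=
  ε⁻¹ ^ 2 * sqHs nu s (PperpG (g t)) + ε * sqHs nu s (PPperpG (g t))
    + sqGradHs s (PPprojG (g t))

/-- Macroscopic density `ρ¹_ε`. -/
def rho1M (G : Fin 2 → V3 → V3 → ℝ) (x : V3) : ℝ := pinner (fun m w => G m x w) phi1
/-- Macroscopic density `ρ²_ε`. -/
def rho2M (G : Fin 2 → V3 → V3 → ℝ) (x : V3) : ℝ := pinner (fun m w => G m x w) phi2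
/-- Macroscopic velocity `u_{εi}`. -/
def uM (G : Fin 2 → V3 → V3 → ℝ) (i : Fin 3) (x : V3) : ℝ :=
  pinner (fun m w => G m x w) (phiU i) / 2
/-- Macroscopic temperature `θ_ε`. -/
def thM (G : Fin 2 → V3 → V3 → ℝ) (x : V3) : ℝ := pinner (fun m w => G m x w) phi6 / 3

/-- Membership in the span of the seventeen-moments basis `𝔅`. -/
def InSpanB (f : Fin 2 → V3 → ℝ) : Prop :=
  ∃ (a₁ a₂ : ℝ) (b₁ b₂ c d : Fin 3 → ℝ) (e : Fin 3 → Fin 3 → ℝ),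
    ∀ l v, f l v =
      (if l = 0 then a₁ else a₂) * sqrtM v
      + (∑ i : Fin 3, (if l = 0 then b₁ i else b₂ i) * v i * sqrtM v)
      + (∑ i : Fin 3, c i * (v i) ^ 2 * sqrtM v)
      + (∑ i : Fin 3, d i * v i * ‖v‖ ^ 2 * sqrtM v)
      + (∑ j : Fin 3, ∑ k : Fin 3, if j < k then e j k * v j * v k * sqrtM v else 0)

/-- Interaction functional `E^{int}_s`. -/
def Eint (s : ℕ) (zij : Fin 3 → Fin 3 → Fin 2 → V3 → ℝ) (zi z1 z2 : Fin 3 → Fin 2 → V3 → ℝ)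
    (G : Fin 2 → V3 → V3 → ℝ) : ℝ :=
  ∑ a ∈ idxSet (s - 1),
    ((∑ i : Fin 3, ∑ j : Fin 3, ∑ l : Fin 2, 72 * ∫ x : V3, ∫ v : V3,
        pdx j (mderiv a (fun z => PPperpG G l z v)) x
          * mderiv a (fun y => uM G i y) x * zij i j l v)
      + (∑ i : Fin 3, ∑ l : Fin 2, 12 * ∫ x : V3, ∫ v : V3,
          pdx i (mderiv a (fun z => PPperpG G l z v)) x
            * mderiv a (fun y => thM G y) x * zi i l v)
      + (∑ i : Fin 3, ∫ x : V3,
          mderiv a (fun y => uM G i y) x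
            * pdx i (mderiv a (fun z => rho1M G z + rho2M G z)) x)
      + (∑ i : Fin 3, ∑ l : Fin 2, ∫ x : V3, ∫ v : V3,
          mderiv a (fun y => PPperpG G l y v) x
            * (pdx i (mderiv a (fun z => rho1M G z)) x * z1 i l v
               + pdx i (mderiv a (fun z => rho2M G z)) x * z2 i l v)))

/-- Pair `L²_v(w)` norm at a fixed point `x`. -/
def vnorm (w : V3 → ℝ) (F : Fin 2 → V3 → ℝ) : ℝ :=
  Real.sqrt (∑ l : Fin 2, ∫ v : V3, (F l v) ^ 2 * w v)

/-- Leray projection `𝒫 = Id - ∇Δ^{-1}div` via the Fourier multiplier `I - ξξᵀ/|ξ|²`. -/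
def leray (F : V3 → Fin 3 → ℝ) (i : Fin 3) (x : V3) : ℝ :=
  F x i - (FourierTransformInv.fourierInv (fun ξ : V3 =>
      ((ξ i / ‖ξ‖ ^ 2 : ℝ) : ℂ) * ∑ j : Fin 3, ((ξ j : ℝ) : ℂ) *
        FourierTransform.fourier (fun y : V3 => (F y j : ℂ)) ξ) x).re

private lemma vpr_add_vps' (v w σ : V3) : vpr v w σ + vps v w σ = v + w := by
  unfold vpr vps; abel

private lemma norm_sq_sum' (v w σ : V3) (hσ : ‖σ‖ = 1) :
    ‖vpr v w σ‖ ^ 2 + ‖vps v w σ‖ ^ 2 = ‖v‖ ^ 2 + ‖w‖ ^ 2 := by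
  set t : ℝ := rinner (v - w) σ with ht
  have h1 : ‖vpr v w σ‖ ^ 2 = ‖v‖ ^ 2 - 2 * (t * rinner v σ) + t ^ 2 := by
    rw [vpr, ← ht, norm_sub_sq_real, real_inner_smul_right, norm_smul, hσ]
    simp [rinner, mul_pow, sq_abs, real_inner_comm]
  have h2 : ‖vps v w σ‖ ^ 2 = ‖w‖ ^ 2 + 2 * (t * rinner w σ) + t ^ 2 := by
    rw [vps, ← ht, norm_add_sq_real, real_inner_smul_right, norm_smul, hσ]
    simp [rinner, mul_pow, sq_abs, real_inner_comm]
  have h3 : rinner v σ - rinner w σ = t := by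
    rw [ht, rinner, rinner, rinner, ← inner_sub_left]
  rw [h1, h2]; linear_combination (-2*t) * h3

private lemma Mw_pos' (v : V3) : 0 < Mw v := by
  unfold Mw; positivity

private lemma Mw_prod' (v w σ : V3) (hσ : ‖σ‖ = 1) :
    Mw (vpr v w σ) * Mw (vps v w σ) = Mw v * Mw w := by
  have h := norm_sq_sum' v w σ hσ
  unfold Mw
  rw [mul_mul_mul_comm, ← Real.exp_add, mul_mul_mul_comm, ← Real.exp_add]
  congr 2
  linarith

private lemma p_sum' (a c : ℝ) (bv v w σ : V3) (hσ : ‖σ‖ = 1) :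
    (a + rinner bv (vpr v w σ) + c * ‖vpr v w σ‖ ^ 2)
      + (a + rinner bv (vps v w σ) + c * ‖vps v w σ‖ ^ 2)
    = (a + rinner bv v + c * ‖v‖ ^ 2) + (a + rinner bv w + c * ‖w‖ ^ 2) := by
  have h1 := norm_sq_sum' v w σ hσ
  have h2 : rinner bv (vpr v w σ) + rinner bv (vps v w σ) = rinner bv v + rinner bv w := by
    unfold rinner
    rw [← inner_add_right (𝕜 := ℝ), ← inner_add_right (𝕜 := ℝ), vpr_add_vps']
  linear_combination h2 + c * h1

private lemma Qop_symm' (b : ℝ → ℝ) (f g : V3 → ℝ) (v : V3) :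
    Qop b f g v = Qop b g f v := by
  unfold Qop
  congr 1
  congr 1
  funext w
  congr 1
  funext σ
  ring

/-- quadratic identity on the kernel of `L̂`: for every collision-invariant
polynomial `p(v) = a + b·v + c|v|²`, one has `Γ̂(p√M, p√M) = ½ L̂(p²√M)`, equivalently
`Q(pM, pM) = -½[Q(p²M, M) + Q(M, p²M)]`. -/
theorem gamma_quadratic_identity_on_kernel (b : ℝ → ℝ) (hb : GradCutoff b)
    (a c : ℝ) (bv : V3) :
    (∀ v : V3,
      Ghat b (fun w => (a + rinner bv w + c * ‖w‖ ^ 2) * sqrtM w)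
        (fun w => (a + rinner bv w + c * ‖w‖ ^ 2) * sqrtM w) v
      = (1/2) * Lhat1 b (fun w => (a + rinner bv w + c * ‖w‖ ^ 2) ^ 2 * sqrtM w) v) ∧
    (∀ v : V3,
      Qop b (fun w => (a + rinner bv w + c * ‖w‖ ^ 2) * Mw w)
        (fun w => (a + rinner bv w + c * ‖w‖ ^ 2) * Mw w) v
      = -(1/2) * (Qop b (fun w => (a + rinner bv w + c * ‖w‖ ^ 2) ^ 2 * Mw w) Mw v
          + Qop b Mw (fun w => (a + rinner bv w + c * ‖w‖ ^ 2) ^ 2 * Mw w) v)) := by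
  have key2 : ∀ v : V3,
      Qop b (fun w => (a + rinner bv w + c * ‖w‖ ^ 2) * Mw w)
        (fun w => (a + rinner bv w + c * ‖w‖ ^ 2) * Mw w) v
      = -(Qop b (fun w => (a + rinner bv w + c * ‖w‖ ^ 2) ^ 2 * Mw w) Mw v) := by
    intro v
    unfold Qop
    rw [← mul_neg, ← integral_neg]
    congr 1
    congr 1
    funext w
    rw [← integral_neg]
    refine setIntegral_congr_fun Metric.isClosed_sphere.measurableSet ?_
    intro σ hσ
    have h1 : ‖σ‖ = 1 := mem_sphere_zero_iff_norm.mp hσ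
    have hM := Mw_prod' v w σ h1
    have hs := p_sum' a c bv v w σ h1
    beta_reduce
    linear_combination
      (kern b v w σ) *
        ((a + rinner bv (vpr v w σ) + c * ‖vpr v w σ‖ ^ 2)
          + (a + rinner bv (vps v w σ) + c * ‖vps v w σ‖ ^ 2)) ^ 2 * hM
      + (kern b v w σ) * Mw v * Mw w *
        ((a + rinner bv (vpr v w σ) + c * ‖vpr v w σ‖ ^ 2)
          + (a + rinner bv (vps v w σ) + c * ‖vps v w σ‖ ^ 2)
          + (a + rinner bv v + c * ‖v‖ ^ 2) + (a + rinner bv w + c * ‖w‖ ^ 2)) * hs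
  have part2 : ∀ v : V3,
      Qop b (fun w => (a + rinner bv w + c * ‖w‖ ^ 2) * Mw w)
        (fun w => (a + rinner bv w + c * ‖w‖ ^ 2) * Mw w) v
      = -(1/2) * (Qop b (fun w => (a + rinner bv w + c * ‖w‖ ^ 2) ^ 2 * Mw w) Mw v
          + Qop b Mw (fun w => (a + rinner bv w + c * ‖w‖ ^ 2) ^ 2 * Mw w) v) := by
    intro v
    rw [Qop_symm' b Mw (fun w => (a + rinner bv w + c * ‖w‖ ^ 2) ^ 2 * Mw w) v, key2 v]
    ring
  refine ⟨?_, part2⟩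
  intro v
  unfold Ghat Lhat1 Lhat
  have hgs : (fun w : V3 => (fun w : V3 => (a + rinner bv w + c * ‖w‖ ^ 2) * sqrtM w) w
        * sqrtM w)
      = (fun w : V3 => (a + rinner bv w + c * ‖w‖ ^ 2) * Mw w) := by
    funext w
    simp only [sqrtM]
    rw [mul_assoc, Real.mul_self_sqrt (Mw_pos' w).le]
  have hq : (fun w : V3 => (fun w : V3 => (a + rinner bv w + c * ‖w‖ ^ 2) ^ 2 * sqrtM w) w
        * sqrtM w)
      = (fun w : V3 => (a + rinner bv w + c * ‖w‖ ^ 2) ^ 2 * Mw w) := by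
    funext w
    simp only [sqrtM]
    rw [mul_assoc, Real.mul_self_sqrt (Mw_pos' w).le]
  rw [hgs, hq, part2 v]
  ring
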